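/- Let A be an m×n matrix and B an n×m matrix with entries in ℍ[[t]]. Then Sdet_t(I_m − AB) = Sdet_t(I_n − BA). -/

import Mathlib

open Quaternion PowerSeries

noncomputable section

/-- The simplex part of a quaternion: `x = x^S + j x^P` with `x^S, x^P ∈ ℂ`. -/
def qS (x : ℍ[ℝ]) : ℂ := ⟨x.re, x.imI⟩

/-- The perplex part of a quaternion. -/
def qP (x : ℍ[ℝ]) : ℂ := ⟨x.imJ, -x.imK⟩

/-- The embedding of `ℂ` into the quaternions as the real subalgebra spanned by `1, i`. -/
def cq : ℂ →+* ℍ[ℝ] where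
  toFun c := ⟨c.re, c.im, 0, 0⟩
  map_one' := by ext <;> simp
  map_mul' a b := by
    ext <;> simp <;> (first | rfl | (show _ = _ - _ - _ - _; ring) | (show _ = _ + _ + _ - _; ring) | (show _ = _ - _ + _ + _; ring) | (show _ = _ + _ - _ + _; ring))
  map_zero' := by ext <;> simp
  map_add' a b := by ext <;> simp <;> (show _ = _ + _; simp)

/-- Coefficientwise quaternion conjugation of a formal power series. -/
def pStar (α : PowerSeries ℍ[ℝ]) : PowerSeries ℍ[ℝ] :=
  PowerSeries.mk fun k => star (PowerSeries.coeff k α)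

/-- Coefficientwise simplex part of a quaternionic power series. -/
def pS (α : PowerSeries ℍ[ℝ]) : PowerSeries ℂ :=
  PowerSeries.mk fun k => qS (PowerSeries.coeff k α)

/-- Coefficientwise perplex part of a quaternionic power series. -/
def pP (α : PowerSeries ℍ[ℝ]) : PowerSeries ℂ :=
  PowerSeries.mk fun k => qP (PowerSeries.coeff k α)

/-- Coefficientwise complex conjugation of a complex power series. -/
def pConj (β : PowerSeries ℂ) : PowerSeries ℂ := PowerSeries.map (starRingEnd ℂ) β

/-- `ψ_t(M) = [[M^S, −conj(M^P)], [M^P, conj(M^S)]]`. -/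
def psiT {ι κ : Type*} (M : Matrix ι κ (PowerSeries ℍ[ℝ])) :
    Matrix (ι ⊕ ι) (κ ⊕ κ) (PowerSeries ℂ) :=
  Matrix.fromBlocks (M.map pS) (-(M.map fun a => pConj (pP a)))
    (M.map pP) (M.map fun a => pConj (pS a))

/-- The Study determinant `Sdet_t(M) = det(ψ_t(M))`. -/
def SdetT {ι : Type*} [Fintype ι] [DecidableEq ι] (M : Matrix ι ι (PowerSeries ℍ[ℝ])) :
    PowerSeries ℂ :=
  (psiT M).det

/-! ### Auxiliary lemmas -/

lemma qS_mul (x y : ℍ[ℝ]) :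
    qS (x * y) = qS x * qS y - (starRingEnd ℂ) (qP x) * qP y := by
  apply Complex.ext <;>
    simp [qS, qP, Complex.mul_re, Complex.mul_im, Quaternion.re_mul, Quaternion.imI_mul] <;> ring

lemma qP_mul (x y : ℍ[ℝ]) :
    qP (x * y) = qP x * qS y + (starRingEnd ℂ) (qS x) * qP y := by
  apply Complex.ext <;>
    simp [qS, qP, Complex.mul_re, Complex.mul_im, Quaternion.imJ_mul, Quaternion.imK_mul] <;> ring

/-- `qS` as an additive monoid hom. -/
def qSh : ℍ[ℝ] →+ ℂ where
  toFun := qS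
  map_zero' := by apply Complex.ext <;> simp [qS]
  map_add' x y := by apply Complex.ext <;> simp [qS]

/-- `qP` as an additive monoid hom. -/
def qPh : ℍ[ℝ] →+ ℂ where
  toFun := qP
  map_zero' := by apply Complex.ext <;> simp [qP]
  map_add' x y := by apply Complex.ext <;> simp [qP] <;> ring

/-- `pS` as an additive monoid hom. -/
def pSh : PowerSeries ℍ[ℝ] →+ PowerSeries ℂ where
  toFun := pS
  map_zero' := by ext k; simp only [pS, PowerSeries.coeff_mk, map_zero]; exact qSh.map_zero
  map_add' α β := by
    ext k
    simp only [pS, PowerSeries.coeff_mk, map_add]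
    exact qSh.map_add _ _

/-- `pP` as an additive monoid hom. -/
def pPh : PowerSeries ℍ[ℝ] →+ PowerSeries ℂ where
  toFun := pP
  map_zero' := by ext k; simp only [pP, PowerSeries.coeff_mk, map_zero]; exact qPh.map_zero
  map_add' α β := by
    ext k
    simp only [pP, PowerSeries.coeff_mk, map_add]
    exact qPh.map_add _ _

lemma pS_zero : pS 0 = 0 := pSh.map_zero
lemma pP_zero : pP 0 = 0 := pPh.map_zero

lemma pS_eq : pS = ⇑pSh := rfl
lemma pP_eq : pP = ⇑pPh := rfl
lemma qS_eq : qS = ⇑qSh := rfl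
lemma qP_eq : qP = ⇑qPh := rfl

lemma pS_mul (α β : PowerSeries ℍ[ℝ]) :
    pS (α * β) = pS α * pS β - pConj (pP α) * pP β := by
  ext k
  simp only [pS, pP, pConj, PowerSeries.coeff_mk, map_sub, PowerSeries.coeff_mul,
    PowerSeries.coeff_map, qS_eq, map_sum, ← Finset.sum_sub_distrib]
  exact Finset.sum_congr rfl fun p _ => qS_mul _ _

lemma pP_mul (α β : PowerSeries ℍ[ℝ]) :
    pP (α * β) = pP α * pS β + pConj (pS α) * pP β := by
  ext k
  simp only [pP, pS, pConj, PowerSeries.coeff_mk, map_add, PowerSeries.coeff_mul,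
    PowerSeries.coeff_map, qP_eq, map_sum, ← Finset.sum_add_distrib]
  exact Finset.sum_congr rfl fun p _ => qP_mul _ _

lemma pConj_add (α β : PowerSeries ℂ) : pConj (α + β) = pConj α + pConj β := by
  simp [pConj, map_add]

lemma pConj_sub (α β : PowerSeries ℂ) : pConj (α - β) = pConj α - pConj β := by
  simp [pConj, map_sub]

lemma pConj_mul (α β : PowerSeries ℂ) : pConj (α * β) = pConj α * pConj β := by
  simp [pConj, map_mul]

lemma pConj_pConj (α : PowerSeries ℂ) : pConj (pConj α) = α := by
  ext k; simp [pConj]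

lemma pConj_zero : pConj 0 = 0 := by simp [pConj]
lemma pConj_one : pConj 1 = 1 := by simp [pConj]

lemma pConj_sum {σ : Type*} {s : Finset σ} (f : σ → PowerSeries ℂ) :
    pConj (∑ p ∈ s, f p) = ∑ p ∈ s, pConj (f p) := by
  simp [pConj, map_sum]

lemma pS_one : pS 1 = 1 := by
  ext k
  simp [pS, PowerSeries.coeff_one, apply_ite qS, qS, qSh.map_zero]
  split <;> apply Complex.ext <;> simp [qS]

lemma pP_one : pP 1 = 0 := by
  ext k
  simp [pP, PowerSeries.coeff_one, apply_ite qP]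
  split <;> apply Complex.ext <;> simp [qP]

lemma psiT_sub {ι κ : Type*} (M N : Matrix ι κ (PowerSeries ℍ[ℝ])) :
    psiT (M - N) = psiT M - psiT N := by
  ext i j
  cases i <;> cases j <;>
    simp [psiT, Matrix.sub_apply, pS_eq, pP_eq, map_sub, pConj_sub] <;> abel

lemma psiT_one {ι : Type*} [Fintype ι] [DecidableEq ι] :
    psiT (1 : Matrix ι ι (PowerSeries ℍ[ℝ])) = 1 := by
  ext i j
  cases i <;> cases j <;>
    simp [psiT, Matrix.one_apply, apply_ite pS, apply_ite pP, apply_ite pConj,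
      pS_one, pP_one, pS_zero, pP_zero, pConj_one, pConj_zero]

lemma psiT_mul {ι κ μ : Type*} [Fintype κ]
    (M : Matrix ι κ (PowerSeries ℍ[ℝ])) (N : Matrix κ μ (PowerSeries ℍ[ℝ])) :
    psiT (M * N) = psiT M * psiT N := by
  refine Matrix.ext fun i j => ?_
  cases i <;> cases j <;>
    simp only [psiT, Matrix.mul_apply, Matrix.fromBlocks_apply₁₁, Matrix.fromBlocks_apply₁₂,
      Matrix.fromBlocks_apply₂₁, Matrix.fromBlocks_apply₂₂, Matrix.map_apply, Matrix.neg_apply,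
      Fintype.sum_sum_type, pS_eq, pP_eq, map_sum] <;>
    simp only [← pS_eq, ← pP_eq, pS_mul, pP_mul, pConj_sum, pConj_sub, pConj_add, pConj_mul,
      pConj_pConj, Finset.sum_sub_distrib, Finset.sum_add_distrib, neg_mul, mul_neg,
      Finset.sum_neg_distrib] <;>
    ring

/-- Proposition 4.8 (viii): for an `m×n` matrix `A` and an `n×m` matrix `B`
over `ℍ[[t]]`, `Sdet_t(I_m − AB) = Sdet_t(I_n − BA)`. -/
theorem SdetT_one_sub_mul_comm {m n : ℕ}
    (A : Matrix (Fin m) (Fin n) (PowerSeries ℍ[ℝ]))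
    (B : Matrix (Fin n) (Fin m) (PowerSeries ℍ[ℝ])) :
    SdetT (1 - A * B) = SdetT (1 - B * A) := by
  unfold SdetT
  rw [psiT_sub, psiT_one, psiT_mul, psiT_sub, psiT_one, psiT_mul,
    Matrix.det_one_sub_mul_comm]

end
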